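/- For every odd prime power q, the number of points P ∈ Z(𝔽_q) such that X₀ = 0 (in homogeneous coordinates of P) equals 2q² − q + 2 + (2q² − 2q)·χ(−1). -/
import Mathlib

open scoped LinearAlgebra.Projectivization


open scoped LinearAlgebra.Projectivization

def SatakeCond {F : Type*} [Field F] (v : Fin 8 → F) : Prop :=
  v 0 ^ 2 = 2 * (v 4 * v 7 + v 5 * v 6) ∧
  v 1 ^ 2 = 2 * (v 4 * v 7 - v 5 * v 6) ∧
  v 2 ^ 2 = 2 * (v 4 * v 6 - v 5 * v 7) ∧
  v 3 ^ 2 = 2 * (v 4 * v 6 + v 5 * v 7)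

section Aux

variable {F : Type} [Field F] [Fintype F] [DecidableEq F]

instance : DecidablePred (SatakeCond (F := F)) := fun v => by
  unfold SatakeCond; infer_instance

lemma satake_smul (a : F) (v : Fin 8 → F) (h : SatakeCond v) : SatakeCond (a • v) := by
  obtain ⟨h0, h1, h2, h3⟩ := h
  refine ⟨?_, ?_, ?_, ?_⟩ <;>
    simp only [Pi.smul_apply, smul_eq_mul]
  · linear_combination a ^ 2 * h0
  · linear_combination a ^ 2 * h1
  · linear_combination a ^ 2 * h2
  · linear_combination a ^ 2 * h3

lemma satake_zero : SatakeCond (0 : Fin 8 → F) := by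
  refine ⟨?_, ?_, ?_, ?_⟩ <;> simp

def satakeEquiv :
    {v : Fin 8 → F // SatakeCond v ∧ v 4 = 0} ≃
      Σ x : F × F × F, {y : F // y ^ 2 = 2 * (x.1 * x.2.1)} ×
        {y : F // y ^ 2 = -(2 * (x.1 * x.2.1))} ×
        {y : F // y ^ 2 = -(2 * (x.1 * x.2.2))} ×
        {y : F // y ^ 2 = 2 * (x.1 * x.2.2)} where
  toFun v :=
    ⟨(v.1 5, v.1 6, v.1 7),
      ⟨v.1 0, by linear_combination v.2.1.1 + (2 * v.1 7) * v.2.2⟩,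
      ⟨v.1 1, by linear_combination v.2.1.2.1 + (2 * v.1 7) * v.2.2⟩,
      ⟨v.1 2, by linear_combination v.2.1.2.2.1 + (2 * v.1 6) * v.2.2⟩,
      ⟨v.1 3, by linear_combination v.2.1.2.2.2 + (2 * v.1 6) * v.2.2⟩⟩
  invFun w :=
    ⟨![w.2.1.1, w.2.2.1.1, w.2.2.2.1.1, w.2.2.2.2.1, 0, w.1.1, w.1.2.1, w.1.2.2],
      ⟨⟨by simpa using (by linear_combination w.2.1.2 : w.2.1.1 ^ 2 = 2 * (0 * w.1.2.2 + w.1.1 * w.1.2.1)),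
        by simpa using (by linear_combination w.2.2.1.2 : w.2.2.1.1 ^ 2 = 2 * (0 * w.1.2.2 - w.1.1 * w.1.2.1)),
        by simpa using (by linear_combination w.2.2.2.1.2 : w.2.2.2.1.1 ^ 2 = 2 * (0 * w.1.2.1 - w.1.1 * w.1.2.2)),
        by simpa using (by linear_combination w.2.2.2.2.2 : w.2.2.2.2.1 ^ 2 = 2 * (0 * w.1.2.1 + w.1.1 * w.1.2.2))⟩,
        by simp⟩⟩
  left_inv v := by
    ext i
    fin_cases i <;> first | rfl | exact v.2.2.symm
  right_inv w := by
    rcases w with ⟨⟨x1, x2, x3⟩, ⟨y0, h0⟩, ⟨y1, h1⟩, ⟨y2, h2⟩, ⟨y3, h3⟩⟩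
    rfl

section Aux2
variable {F : Type} [Field F] [Fintype F] [DecidableEq F]

lemma satake_card_sqrt (hodd : ringChar F ≠ 2) (a : F) :
    (Fintype.card {y : F // y ^ 2 = a} : ℤ) = quadraticChar F a + 1 := by
  rw [← quadraticChar_card_sqrts hodd a]
  norm_cast
  rw [Set.toFinset_card]
  exact (Fintype.card_congr (Equiv.subtypeEquivRight fun x => Iff.rfl)).symm

lemma satake_Hsum (hodd : ringChar F ≠ 2) :
    ∑ s : F, (quadraticChar F s + 1) * (quadraticChar F (-s) + 1)
      = (Fintype.card F : ℤ) + ((Fintype.card F : ℤ) - 1) * quadraticChar F (-1) := by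
  have h1 : ∀ s : F, (quadraticChar F s + 1) * (quadraticChar F (-s) + 1)
      = quadraticChar F (-1) * (quadraticChar F s) ^ 2
        + (1 + quadraticChar F (-1)) * quadraticChar F s + 1 := by
    intro s
    have h : quadraticChar F (-s) = quadraticChar F (-1) * quadraticChar F s := by
      rw [← map_mul]; ring_nf
    rw [h]; ring
  have hsq : ∑ s : F, (quadraticChar F s) ^ 2 = (Fintype.card F : ℤ) - 1 := by
    rw [← Finset.add_sum_erase _ _ (Finset.mem_univ (0 : F))]
    rw [Finset.sum_congr rfl (fun s hs => quadraticChar_sq_one (Finset.ne_of_mem_erase hs))]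
    simp [Finset.card_erase_of_mem, Finset.card_univ]
    have : 0 < Fintype.card F := Fintype.card_pos
    omega
  simp only [h1]
  rw [Finset.sum_add_distrib, Finset.sum_add_distrib, ← Finset.mul_sum, ← Finset.mul_sum,
    quadraticChar_sum_zero hodd, hsq]
  simp [Finset.card_univ]
  ring

lemma satake_sum_reindex (f : F → ℤ) {a : F} (ha : a ≠ 0) :
    ∑ t : F, f (a * t) = ∑ s : F, f s :=
  Fintype.sum_equiv (Equiv.mulLeft₀ a ha) _ _ (fun t => rfl)

lemma satake_inner_sum (hodd : ringChar F ≠ 2) (x1 : F) :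
    (∑ x2 : F, ∑ x3 : F,
        (quadraticChar F (2 * (x1 * x2)) + 1) * ((quadraticChar F (-(2 * (x1 * x2))) + 1) *
          ((quadraticChar F (-(2 * (x1 * x3))) + 1) * (quadraticChar F (2 * (x1 * x3)) + 1))))
      = if x1 = 0 then (Fintype.card F : ℤ) ^ 2
        else ((Fintype.card F : ℤ) + ((Fintype.card F : ℤ) - 1) * quadraticChar F (-1)) ^ 2 := by
  have regroup : (∑ x2 : F, ∑ x3 : F,
        (quadraticChar F (2 * (x1 * x2)) + 1) * ((quadraticChar F (-(2 * (x1 * x2))) + 1) *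
          ((quadraticChar F (-(2 * (x1 * x3))) + 1) * (quadraticChar F (2 * (x1 * x3)) + 1))))
      = (∑ x2 : F, (quadraticChar F (2 * (x1 * x2)) + 1) * (quadraticChar F (-(2 * (x1 * x2))) + 1))
        * (∑ x3 : F, (quadraticChar F (2 * (x1 * x3)) + 1) * (quadraticChar F (-(2 * (x1 * x3))) + 1)) := by
    rw [Finset.sum_mul_sum]
    exact Finset.sum_congr rfl fun x2 _ => Finset.sum_congr rfl fun x3 _ => by ring
  rw [regroup]
  by_cases hx : x1 = 0
  · simp [hx, Finset.card_univ]
    ring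
  · rw [if_neg hx]
    have h2 : (2 : F) * x1 ≠ 0 := mul_ne_zero (Ring.two_ne_zero hodd) hx
    have key : ∑ x2 : F, (quadraticChar F (2 * (x1 * x2)) + 1)
        * (quadraticChar F (-(2 * (x1 * x2))) + 1)
        = (Fintype.card F : ℤ) + ((Fintype.card F : ℤ) - 1) * quadraticChar F (-1) := by
      have := satake_sum_reindex
        (fun s => (quadraticChar F s + 1) * (quadraticChar F (-s) + 1)) h2
      rw [← satake_Hsum hodd, ← this]
      exact Finset.sum_congr rfl fun x2 _ => by rw [mul_assoc]
    rw [key]; ring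

end Aux2

section Aux3
variable {F : Type} [Field F] [Fintype F] [DecidableEq F]

lemma satake_card_affine (hodd : ringChar F ≠ 2) :
    (Fintype.card {v : Fin 8 → F // SatakeCond v ∧ v 4 = 0} : ℤ)
      = (Fintype.card F : ℤ) ^ 2 + ((Fintype.card F : ℤ) - 1) *
          ((Fintype.card F : ℤ) + ((Fintype.card F : ℤ) - 1) * quadraticChar F (-1)) ^ 2 := by
  rw [Fintype.card_congr (satakeEquiv (F := F)), Fintype.card_sigma]
  push_cast
  have term : ∀ x : F × F × F,
      ((Fintype.card ({y : F // y ^ 2 = 2 * (x.1 * x.2.1)} ×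
        {y : F // y ^ 2 = -(2 * (x.1 * x.2.1))} ×
        {y : F // y ^ 2 = -(2 * (x.1 * x.2.2))} ×
        {y : F // y ^ 2 = 2 * (x.1 * x.2.2)}) : ℕ) : ℤ)
      = (quadraticChar F (2 * (x.1 * x.2.1)) + 1) * ((quadraticChar F (-(2 * (x.1 * x.2.1))) + 1) *
          ((quadraticChar F (-(2 * (x.1 * x.2.2))) + 1) *
            (quadraticChar F (2 * (x.1 * x.2.2)) + 1))) := by
    intro x
    simp only [Fintype.card_prod]
    push_cast
    rw [satake_card_sqrt hodd, satake_card_sqrt hodd, satake_card_sqrt hodd,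
      satake_card_sqrt hodd]
  rw [Finset.sum_congr rfl fun x _ => term x]
  rw [Fintype.sum_prod_type]
  have inner : ∀ x1 : F, (∑ y : F × F,
      (quadraticChar F (2 * (x1 * y.1)) + 1) * ((quadraticChar F (-(2 * (x1 * y.1))) + 1) *
          ((quadraticChar F (-(2 * (x1 * y.2))) + 1) * (quadraticChar F (2 * (x1 * y.2)) + 1))))
      = if x1 = 0 then (Fintype.card F : ℤ) ^ 2
        else ((Fintype.card F : ℤ) + ((Fintype.card F : ℤ) - 1) * quadraticChar F (-1)) ^ 2 := by
    intro x1
    rw [Fintype.sum_prod_type]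
    exact satake_inner_sum hodd x1
  rw [Finset.sum_congr rfl fun x1 _ => inner x1]
  rw [← Finset.add_sum_erase _ _ (Finset.mem_univ (0 : F))]
  rw [Finset.sum_congr rfl fun x hx => if_neg (Finset.ne_of_mem_erase hx), Finset.sum_const,
    Finset.card_erase_of_mem (Finset.mem_univ _), Finset.card_univ, if_pos rfl]
  have h1 : (1 : ℕ) ≤ Fintype.card F := Fintype.card_pos
  rw [nsmul_eq_mul, Nat.cast_sub h1]
  push_cast
  ring

instance : Finite (ℙ F (Fin 8 → F)) := Quotient.finite _

lemma satake_proj_mul :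
    Nat.card {v : Fin 8 → F // v ≠ 0 ∧ SatakeCond v ∧ v 4 = 0}
      = Nat.card {p : ℙ F (Fin 8 → F) // SatakeCond p.rep ∧ p.rep 4 = 0}
        * (Fintype.card F - 1) := by
  have hf : Function.Bijective
      (fun pu : {p : ℙ F (Fin 8 → F) // SatakeCond p.rep ∧ p.rep 4 = 0} × Fˣ =>
      (⟨(pu.2 : F) • pu.1.1.rep,
        smul_ne_zero (Units.ne_zero pu.2) pu.1.1.rep_nonzero,
        satake_smul _ _ pu.1.2.1,
        by simp [pu.1.2.2]⟩ : {v : Fin 8 → F // v ≠ 0 ∧ SatakeCond v ∧ v 4 = 0})) := by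
    constructor
    · rintro ⟨⟨p, hp⟩, a⟩ ⟨⟨p', hp'⟩, a'⟩ h
      have hv : (a : F) • p.rep = (a' : F) • p'.rep := congrArg Subtype.val h
      have hmk : ∀ (r : ℙ F (Fin 8 → F)) (b : Fˣ),
          Projectivization.mk F ((b : F) • r.rep)
            (smul_ne_zero (Units.ne_zero b) r.rep_nonzero) = r := by
        intro r b
        conv_rhs => rw [← r.mk_rep]
        exact (Projectivization.mk_eq_mk_iff F _ _ _ _).2 ⟨b, rfl⟩
      have hpp : p = p' := by
        rw [← hmk p a, ← hmk p' a']
        congr 1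
      subst hpp
      have hvv : (a : F) = (a' : F) :=
        smul_left_injective F p.rep_nonzero hv
      simp only [Prod.mk.injEq, Subtype.mk.injEq]
      exact ⟨trivial, Units.ext hvv⟩
    · rintro ⟨v, hne, hc, h4⟩
      obtain ⟨a, ha⟩ := Projectivization.exists_smul_eq_mk_rep F v hne
      have ha' : (a : F) • v = (Projectivization.mk F v hne).rep := ha
      refine ⟨⟨⟨Projectivization.mk F v hne, ?_, ?_⟩, a⁻¹⟩, ?_⟩
      · rw [← ha']; exact satake_smul _ _ hc
      · rw [← ha']; simp [h4]
      · apply Subtype.ext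
        simp only [← ha', smul_smul]
        rw [Units.inv_mul, one_smul]
  rw [← Nat.card_eq_of_bijective _ hf, Nat.card_prod, Nat.card_eq_fintype_card (α := Fˣ),
    Fintype.card_units]

lemma satake_card_split :
    Fintype.card {v : Fin 8 → F // SatakeCond v ∧ v 4 = 0}
      = Nat.card {v : Fin 8 → F // v ≠ 0 ∧ SatakeCond v ∧ v 4 = 0} + 1 := by
  rw [Nat.card_eq_fintype_card, Fintype.card_subtype, Fintype.card_subtype]
  have hins : Finset.filter (fun v : Fin 8 → F => SatakeCond v ∧ v 4 = 0) Finset.univ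
      = insert 0 (Finset.filter (fun v : Fin 8 → F => v ≠ 0 ∧ SatakeCond v ∧ v 4 = 0)
          Finset.univ) := by
    ext v
    simp only [Finset.mem_filter, Finset.mem_univ, true_and, Finset.mem_insert]
    constructor
    · intro h
      by_cases hv : v = 0
      · exact Or.inl hv
      · exact Or.inr ⟨hv, h⟩
    · rintro (rfl | ⟨-, h⟩)
      · exact ⟨satake_zero, rfl⟩
      · exact h
  rw [hins, Finset.card_insert_of_notMem (by simp)]

end Aux3

/-- For every finite field `F` of odd cardinality `q`, the number of points `P ∈ Z(𝔽_q)`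
with `X₀ = 0` equals `2q² - q + 2 + (2q² - 2q)·χ(-1)`. -/
theorem satake_X0_zero_count (F : Type) [Field F] [Fintype F] [DecidableEq F]
    (hodd : ringChar F ≠ 2) :
    (Nat.card {p : ℙ F (Fin 8 → F) // SatakeCond p.rep ∧ p.rep 4 = 0} : ℤ) =
      2 * (Fintype.card F : ℤ) ^ 2 - (Fintype.card F : ℤ) + 2 +
        (2 * (Fintype.card F : ℤ) ^ 2 - 2 * (Fintype.card F : ℤ)) *
          quadraticChar F (-1) := by
  have hε : (quadraticChar F (-1) : ℤ) * (quadraticChar F (-1) : ℤ) = 1 := by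
    have h := quadraticChar_sq_one (F := F) (a := -1) (neg_ne_zero.mpr one_ne_zero)
    rw [sq] at h
    exact h
  have hq2 : 2 ≤ Fintype.card F := Fintype.one_lt_card
  have h3 := satake_card_split (F := F)
  rw [satake_proj_mul (F := F)] at h3
  have h3' : (Fintype.card {v : Fin 8 → F // SatakeCond v ∧ v 4 = 0} : ℤ)
      = (Nat.card {p : ℙ F (Fin 8 → F) // SatakeCond p.rep ∧ p.rep 4 = 0} : ℤ)
          * ((Fintype.card F : ℤ) - 1) + 1 := by
    rw [h3]
    push_cast [Nat.cast_sub (le_of_lt hq2)]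
    ring
  have h1 := satake_card_affine (F := F) hodd
  rw [h3'] at h1
  have hcancel : (Nat.card {p : ℙ F (Fin 8 → F) // SatakeCond p.rep ∧ p.rep 4 = 0} : ℤ)
        * ((Fintype.card F : ℤ) - 1)
      = (2 * (Fintype.card F : ℤ) ^ 2 - (Fintype.card F : ℤ) + 2 +
          (2 * (Fintype.card F : ℤ) ^ 2 - 2 * (Fintype.card F : ℤ)) * quadraticChar F (-1))
        * ((Fintype.card F : ℤ) - 1) := by
    linear_combination h1 + ((Fintype.card F : ℤ) - 1) ^ 3 * hε
  have hne : (Fintype.card F : ℤ) - 1 ≠ 0 := by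
    have h2 : (2 : ℤ) ≤ (Fintype.card F : ℤ) := by exact_mod_cast hq2
    exact ne_of_gt (by linarith)
  exact mul_right_cancel₀ hne hcancel
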